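/- arXiv:2305.18768 — 4 statements merged into one kernel-verified Lean document; each statement's English description precedes it below -/
import Mathlib

section
/- Let H be a real Banach space, F : H → H a continuous map, and v : ℝ → H continuously differentiable on [0,1]. Suppose that for every continuously differentiable function ρ : ℝ → ℝ and every continuous linear functional λ : H → ℝ one has ρ(1)·λ(v(1)) − ρ(0)·λ(v(0)) = ∫₀¹ ( ρ'(t)·λ(v(t)) + ρ(t)·λ(F(v(t))) ) dt. Then v'(t) = F(v(t)) for all t ∈ [0,1]. -/
/-!
Integrating by parts, the test identity says that for every continuous linear functional `λ`
the continuous function `λ (v' t - F (v t))` integrates to zero on `[0,1]` against every C¹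
function. By the fundamental lemma of the calculus of variations it vanishes on `[0,1]`, and
since the continuous linear functionals separate the points of `H`, `v' = F ∘ v` there.
-/

open Set MeasureTheory
open scoped ContDiff

theorem eqOn_zero_of_forall_intervalIntegral_smul_eq_zero {E : Type*} [NormedAddCommGroup E]
    [NormedSpace ℝ E] [CompleteSpace E] {g : ℝ → E} {a b : ℝ} (hab : a < b)
    (hg : ContinuousOn g (Icc a b))
    (h : ∀ ρ : ℝ → ℝ, ContDiff ℝ ∞ ρ → tsupport ρ ⊆ Ioo a b → ∫ t in a..b, ρ t • g t = 0) :
    EqOn g 0 (Icc a b) := by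
  have hae : ∀ᵐ t, t ∈ Ioo a b → g t = 0 := by
    refine isOpen_Ioo.ae_eq_zero_of_integral_contDiff_smul_eq_zero
      ((hg.locallyIntegrableOn measurableSet_Icc).mono_set Ioo_subset_Icc_self)
      fun ρ hρ _ hsupp => ?_
    rw [← h ρ hρ hsupp, intervalIntegral.integral_of_le hab.le,
      setIntegral_eq_integral_of_forall_compl_eq_zero]
    intro t ht
    rw [image_eq_zero_of_notMem_tsupport fun ht' => ht (Ioo_subset_Ioc_self (hsupp ht')),
      zero_smul]
  have hIcc : g =ᵐ[volume.restrict (Icc a b)] 0 := by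
    rw [← Measure.restrict_congr_set Ioo_ae_eq_Icc]
    exact (ae_restrict_iff' measurableSet_Ioo).2 hae
  exact Measure.eqOn_Icc_of_ae_eq volume hab.ne hIcc hg continuousOn_const

theorem intervalIntegral_smul_sub_eq_zero_of_weak_deriv {a b : ℝ} (hab : a ≤ b) {ρ : ℝ → ℝ}
    (hρ : ContDiff ℝ 1 ρ) {u u' w : ℝ → ℝ} (hu : ∀ t ∈ Icc a b, HasDerivAt u (u' t) t)
    (hu' : ContinuousOn u' (Icc a b)) (hw : ContinuousOn w (Icc a b))
    (hweak : ρ b * u b - ρ a * u a = ∫ t in a..b, deriv ρ t * u t + ρ t * w t) :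
    ∫ t in a..b, ρ t • (u' t - w t) = 0 := by
  have hρ' : Continuous (deriv ρ) := hρ.continuous_deriv le_rfl
  have huc : ContinuousOn u (Icc a b) := fun t ht => (hu t ht).continuousAt.continuousWithinAt
  have hibp : ∫ t in a..b, deriv ρ t * u t + ρ t * u' t = ρ b * u b - ρ a * u a :=
    intervalIntegral.integral_deriv_mul_eq_sub
      (fun t _ => (hρ.differentiable one_ne_zero t).hasDerivAt)
      (fun t ht => hu t (by rwa [uIcc_of_le hab] at ht))
      (hρ'.intervalIntegrable a b) (hu'.intervalIntegrable_of_Icc hab)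
  have hint : ∀ f : ℝ → ℝ, ContinuousOn f (Icc a b) →
      IntervalIntegrable (fun t => deriv ρ t * u t + ρ t * f t) volume a b := fun f hf =>
    ((hρ'.continuousOn.mul huc).add (hρ.continuous.continuousOn.mul hf)).intervalIntegrable_of_Icc
      hab
  calc ∫ t in a..b, ρ t • (u' t - w t)
      = (∫ t in a..b, deriv ρ t * u t + ρ t * u' t) -
          ∫ t in a..b, deriv ρ t * u t + ρ t * w t := by
        rw [← intervalIntegral.integral_sub (hint u' hu') (hint w hw)]
        simp only [smul_eq_mul]
        congr 1
        ext t
        ring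
    _ = 0 := by rw [hibp, hweak, sub_self]

theorem measure_reformulation_converse_general
    {H : Type*} [NormedAddCommGroup H] [NormedSpace ℝ H]
    (F : H → H) (hF : Continuous F) (v v' : ℝ → H)
    (hv : ∀ t ∈ Set.Icc (0:ℝ) 1, HasDerivAt v (v' t) t)
    (hv' : ContinuousOn v' (Set.Icc (0:ℝ) 1))
    (htest : ∀ ρ : ℝ → ℝ, ContDiff ℝ 1 ρ → ∀ lam : H →L[ℝ] ℝ,
      ρ 1 * lam (v 1) - ρ 0 * lam (v 0) =
        ∫ t in (0:ℝ)..1, (deriv ρ t * lam (v t) + ρ t * lam (F (v t)))) :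
    ∀ t ∈ Set.Icc (0:ℝ) 1, v' t = F (v t) := by
  have hvc : ContinuousOn v (Icc 0 1) := fun t ht => (hv t ht).continuousAt.continuousWithinAt
  have hFv : ContinuousOn (fun t => F (v t)) (Icc 0 1) := hF.comp_continuousOn hvc
  intro t ht
  rw [← sub_eq_zero]
  refine SeparatingDual.eq_zero_of_forall_dual_eq_zero (R := ℝ) fun lam => ?_
  have hdefect : ContinuousOn (fun s => lam (v' s - F (v s))) (Icc 0 1) :=
    lam.continuous.comp_continuousOn (hv'.sub hFv)
  refine eqOn_zero_of_forall_intervalIntegral_smul_eq_zero zero_lt_one hdefect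
    (fun ρ hρ _ => ?_) ht
  have hρ1 : ContDiff ℝ 1 ρ := hρ.of_le (by simp)
  simp only [map_sub]
  exact intervalIntegral_smul_sub_eq_zero_of_weak_deriv zero_le_one hρ1
    (fun s hs => lam.hasFDerivAt.comp_hasDerivAt s (hv s hs))
    (lam.continuous.comp_continuousOn hv') (lam.continuous.comp_continuousOn hFv)
    (htest ρ hρ1 lam)

/-- Converse direction of Theorem 1: if a C¹ curve `v` satisfies the linear
measure equation tested against all products `ρ(t)·λ(h)` with `ρ` C¹ and `λ`
a continuous linear functional, then `v' = F(v)` on `[0,1]`. -/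
theorem measure_reformulation_converse
    {H : Type*} [NormedAddCommGroup H] [NormedSpace ℝ H] [CompleteSpace H]
    (F : H → H) (hF : Continuous F) (v v' : ℝ → H)
    (hv : ∀ t ∈ Set.Icc (0:ℝ) 1, HasDerivAt v (v' t) t)
    (hv' : ContinuousOn v' (Set.Icc (0:ℝ) 1))
    (htest : ∀ ρ : ℝ → ℝ, ContDiff ℝ 1 ρ → ∀ lam : H →L[ℝ] ℝ,
      ρ 1 * lam (v 1) - ρ 0 * lam (v 0) =
        ∫ t in (0:ℝ)..1, (deriv ρ t * lam (v t) + ρ t * lam (F (v t)))) :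
    ∀ t ∈ Set.Icc (0:ℝ) 1, v' t = F (v t) :=
  measure_reformulation_converse_general F hF v v' hv hv' htest
end

section
/- Let u : ℝ × ℝ → ℂ be such that u(t, x + 2π) = u(t, x) for all t, x, u is continuously differentiable in t, twice continuously differentiable in x, with ∂u/∂t and ∂²u/∂x² jointly continuous, and suppose ∂u/∂t (t,x) = ∂²u/∂x² (t,x) for all t ∈ [0,1] and x ∈ ℝ. For n ∈ ℤ define c_n(t) := (1/(2π)) ∫_{−π}^{π} u(t,x) e^{−i n x} dx. Then for all ℓ, k ∈ ℕ and n₁, …, n_k ∈ ℤ: ∏_{j=1}^k c_{n_j}(1) − 0^ℓ ∏_{j=1}^k c_{n_j}(0) = ∫₀¹ ℓ t^{ℓ−1} ∏_{j=1}^k c_{n_j}(t) dt − (Σ_{j=1}^k n_j²) ∫₀¹ t^ℓ ∏_{j=1}^k c_{n_j}(t) dt, where 0⁰ = 1 and the term ℓ t^{ℓ−1} is identically zero when ℓ = 0. -/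
/-- The `n`-th Fourier coefficient of `u(t,·)`:
`c_n(t) = (1/(2π)) ∫_{-π}^{π} u(t,x) e^{-inx} dx`. -/
noncomputable def fourierCoeffHeat (u : ℝ × ℝ → ℂ) (n : ℤ) (t : ℝ) : ℂ :=
  (2 * (Real.pi : ℂ))⁻¹ *
    ∫ x in (-Real.pi)..Real.pi, u (t, x) * Complex.exp (-Complex.I * (n : ℂ) * (x : ℂ))

/-!
Each Fourier coefficient solves `c_n' = -n² c_n` on `[0,1]`: differentiate under the integral
sign, use the heat equation, and integrate by parts twice, the boundary terms cancelling by
periodicity. Hence `P = ∏ c_{n_j}` satisfies `P' = -(Σ n_j²) P`, and the moment equation is the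
fundamental theorem of calculus for `t ↦ t^ℓ P(t)`.
-/

open MeasureTheory Real

theorem Function.Periodic.periodic_of_hasDerivAt {𝕜 F : Type*} [NontriviallyNormedField 𝕜]
    [NormedAddCommGroup F] [NormedSpace 𝕜 F] {f f' : 𝕜 → F} {c : 𝕜}
    (hf : Function.Periodic f c) (hd : ∀ x, HasDerivAt f (f' x) x) :
    Function.Periodic f' c := fun x => by
  have h := (hd (x + c)).comp_add_const x c
  rw [show (fun y => f (y + c)) = f from funext hf] at h
  exact h.unique (hd x)

theorem Function.Periodic.apply_pi_eq {F : Type*} {f : ℝ → F}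
    (hf : Function.Periodic f (2 * π)) :
    f π = f (-π) := by
  simpa [two_mul] using hf (-π)

theorem hasDerivAt_intervalIntegral_of_continuous_partial {E : Type*} [NormedAddCommGroup E]
    [NormedSpace ℝ E] {F Ft : ℝ × ℝ → E} {a b : ℝ}
    (hF : ∀ t, Continuous fun x => F (t, x)) (hFt : Continuous Ft)
    (hd : ∀ t x, HasDerivAt (fun s => F (s, x)) (Ft (t, x)) t) (t₀ : ℝ) :
    HasDerivAt (fun t => ∫ x in a..b, F (t, x)) (∫ x in a..b, Ft (t₀, x)) t₀ := by
  obtain ⟨M, hM⟩ := ((isCompact_closedBall t₀ 1).prod (isCompact_uIcc (a := a) (b := b))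
    ).exists_bound_of_continuousOn hFt.continuousOn
  refine (intervalIntegral.hasDerivAt_integral_of_dominated_loc_of_deriv_le
    (F := fun t x => F (t, x)) (bound := fun _ => M) (Metric.closedBall_mem_nhds t₀ one_pos)
    (Filter.Eventually.of_forall fun t => (hF t).aestronglyMeasurable)
    ((hF t₀).intervalIntegrable a b)
    (hFt.comp (Continuous.prodMk_right t₀)).aestronglyMeasurable
    (Filter.Eventually.of_forall fun x hx s hs => hM (s, x) ⟨hs, Set.uIoc_subset_uIcc hx⟩)
    intervalIntegrable_const
    (Filter.Eventually.of_forall fun x _ s _ => hd s x)).2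

theorem HasDerivAt.finset_prod_of_hasDerivAt_const_mul {ι 𝕜 𝔸 : Type*}
    [NontriviallyNormedField 𝕜] [NormedCommRing 𝔸] [NormedAlgebra 𝕜 𝔸]
    (s : Finset ι) {f : ι → 𝕜 → 𝔸} {a : ι → 𝔸} {x : 𝕜}
    (h : ∀ i ∈ s, HasDerivAt (f i) (a i * f i x) x) :
    HasDerivAt (fun y => ∏ i ∈ s, f i y) ((∑ i ∈ s, a i) * ∏ i ∈ s, f i x) x := by
  classical
  refine (HasDerivAt.fun_finsetProd h).congr_deriv ?_
  rw [Finset.sum_mul]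
  refine Finset.sum_congr rfl fun i hi => ?_
  rw [smul_eq_mul, mul_left_comm, Finset.prod_erase_mul _ _ hi]

theorem moment_identity_of_hasDerivAt_const_mul {P : ℝ → ℂ} {c : ℂ} {a b : ℝ} (ℓ : ℕ)
    (hP : ∀ t ∈ Set.uIcc a b, HasDerivAt P (c * P t) t) :
    (b : ℂ) ^ ℓ * P b - (a : ℂ) ^ ℓ * P a =
      (∫ t in a..b, (ℓ : ℂ) * (t : ℂ) ^ (ℓ - 1) * P t) +
        c * ∫ t in a..b, (t : ℂ) ^ ℓ * P t := by
  have hPc : ContinuousOn P (Set.uIcc a b) := fun t ht => (hP t ht).continuousAt.continuousWithinAt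
  have hA :
      IntervalIntegrable (fun t : ℝ => (ℓ : ℂ) * (t : ℂ) ^ (ℓ - 1) * P t) volume a b :=
    (ContinuousOn.mul (by fun_prop) hPc).intervalIntegrable
  have hB : IntervalIntegrable (fun t : ℝ => (t : ℂ) ^ ℓ * P t) volume a b :=
    (ContinuousOn.mul (by fun_prop) hPc).intervalIntegrable
  have hderiv : ∀ t ∈ Set.uIcc a b, HasDerivAt (fun t : ℝ => (t : ℂ) ^ ℓ * P t)
      ((ℓ : ℂ) * (t : ℂ) ^ (ℓ - 1) * P t + c * ((t : ℂ) ^ ℓ * P t)) t := fun t ht => by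
    refine (((hasDerivAt_pow ℓ (t : ℂ)).comp_ofReal).fun_mul (hP t ht)).congr_deriv ?_
    ring
  rw [← intervalIntegral.integral_const_mul,
    ← intervalIntegral.integral_add hA (hB.const_mul c),
    intervalIntegral.integral_eq_sub_of_hasDerivAt hderiv (hA.add (hB.const_mul c))]

noncomputable def fourierExp (n : ℤ) (x : ℝ) : ℂ := Complex.exp (-Complex.I * n * x)

theorem hasDerivAt_fourierExp (n : ℤ) (x : ℝ) :
    HasDerivAt (fourierExp n) (fourierExp n x * (-Complex.I * n)) x := by
  show HasDerivAt (fun x : ℝ => Complex.exp (-Complex.I * n * x)) _ x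
  simpa [fourierExp] using ((hasDerivAt_id (x : ℂ)).const_mul (-Complex.I * n)).comp_ofReal.cexp

theorem continuous_fourierExp (n : ℤ) : Continuous (fourierExp n) := by
  unfold fourierExp; fun_prop

theorem fourierExp_periodic (n : ℤ) : Function.Periodic (fourierExp n) (2 * π) := fun x => by
  have : -Complex.I * n * ((x + 2 * π : ℝ) : ℂ) =
      -Complex.I * n * x + (-n : ℤ) * (2 * π * Complex.I) := by
    push_cast; ring
  rw [fourierExp, this, Complex.exp_add, Complex.exp_int_mul_two_pi_mul_I, mul_one, fourierExp]

theorem integral_deriv_mul_fourierExp {v v' : ℝ → ℂ} (hv : ∀ x, HasDerivAt v (v' x) x)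
    (hv' : IntervalIntegrable v' volume (-π) π) (hend : v π = v (-π)) (n : ℤ) :
    ∫ x in -π..π, v' x * fourierExp n x =
      Complex.I * n * ∫ x in -π..π, v x * fourierExp n x := by
  have hparts := intervalIntegral.integral_mul_deriv_eq_deriv_mul (fun x _ => hv x)
    (fun x _ => hasDerivAt_fourierExp n x) hv'
    (((continuous_fourierExp n).mul continuous_const).intervalIntegrable _ _)
  have hpull : ∫ x in -π..π, v x * (fourierExp n x * (-Complex.I * n)) =
      -Complex.I * n * ∫ x in -π..π, v x * fourierExp n x := by
    rw [← intervalIntegral.integral_const_mul]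
    exact intervalIntegral.integral_congr fun x _ => by ring
  rw [hend, (fourierExp_periodic n).apply_pi_eq, sub_self, zero_sub, hpull] at hparts
  linear_combination hparts

theorem integral_second_deriv_mul_fourierExp {v v' v'' : ℝ → ℂ}
    (hv : Function.Periodic v (2 * π)) (hv' : ∀ x, HasDerivAt v (v' x) x)
    (hv'' : ∀ x, HasDerivAt v' (v'' x) x) (hint : IntervalIntegrable v'' volume (-π) π)
    (n : ℤ) :
    ∫ x in -π..π, v'' x * fourierExp n x =
      -(n : ℂ) ^ 2 * ∫ x in -π..π, v x * fourierExp n x := by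
  have hv'c : Continuous v' := continuous_iff_continuousAt.2 fun x => (hv'' x).continuousAt
  rw [integral_deriv_mul_fourierExp hv'' hint (hv.periodic_of_hasDerivAt hv').apply_pi_eq,
    integral_deriv_mul_fourierExp hv' (hv'c.intervalIntegrable _ _) hv.apply_pi_eq]
  linear_combination ((n : ℂ) ^ 2 * ∫ x in -π..π, v x * fourierExp n x) * Complex.I_sq

theorem hasDerivAt_fourierCoeffHeat {u ut : ℝ × ℝ → ℂ}
    (hu : ∀ t, Continuous fun x => u (t, x)) (hut : Continuous ut)
    (hdt : ∀ t x, HasDerivAt (fun s => u (s, x)) (ut (t, x)) t)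
    (n : ℤ) (t : ℝ) :
    HasDerivAt (fourierCoeffHeat u n) (fourierCoeffHeat ut n t) t :=
  (hasDerivAt_intervalIntegral_of_continuous_partial (F := fun p => u p * fourierExp n p.2)
    (Ft := fun p => ut p * fourierExp n p.2)
    (fun t => (hu t).mul (continuous_fourierExp n))
    (hut.mul ((continuous_fourierExp n).comp continuous_snd))
    (fun t x => (hdt t x).mul_const (fourierExp n x)) t).const_mul _

theorem fourierCoeffHeat_second_deriv_eq_neg_sq_mul {u ux uxx : ℝ × ℝ → ℂ} {t : ℝ}
    (hper : Function.Periodic (fun x => u (t, x)) (2 * π))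
    (hdx : ∀ x, HasDerivAt (fun y => u (t, y)) (ux (t, x)) x)
    (hdxx : ∀ x, HasDerivAt (fun y => ux (t, y)) (uxx (t, x)) x)
    (huxx : Continuous fun x => uxx (t, x)) (n : ℤ) :
    fourierCoeffHeat uxx n t = -(n : ℂ) ^ 2 * fourierCoeffHeat u n t := by
  change _ * ∫ x in -π..π, uxx (t, x) * fourierExp n x =
    _ * (_ * ∫ x in -π..π, u (t, x) * fourierExp n x)
  rw [integral_second_deriv_mul_fourierExp hper hdx hdxx (huxx.intervalIntegrable _ _)]
  ring

theorem linear_moment_equation_heat_general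
    (u ut ux uxx : ℝ × ℝ → ℂ)
    (hper : ∀ t x : ℝ, u (t, x + 2 * Real.pi) = u (t, x))
    (hut : Continuous ut) (huxx : Continuous uxx)
    (hdt : ∀ t x : ℝ, HasDerivAt (fun s => u (s, x)) (ut (t, x)) t)
    (hdx : ∀ t x : ℝ, HasDerivAt (fun y => u (t, y)) (ux (t, x)) x)
    (hdxx : ∀ t x : ℝ, HasDerivAt (fun y => ux (t, y)) (uxx (t, x)) x)
    (hheat : ∀ t ∈ Set.Icc (0:ℝ) 1, ∀ x : ℝ, ut (t, x) = uxx (t, x)) :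
    ∀ (ℓ k : ℕ) (n : Fin k → ℤ),
      (∏ j, fourierCoeffHeat u (n j) 1) - (0 : ℂ) ^ ℓ * ∏ j, fourierCoeffHeat u (n j) 0 =
        (∫ t in (0:ℝ)..1, (ℓ : ℂ) * (t : ℂ) ^ (ℓ - 1) * ∏ j, fourierCoeffHeat u (n j) t) -
        (∑ j, ((n j : ℂ)) ^ 2) *
          ∫ t in (0:ℝ)..1, (t : ℂ) ^ ℓ * ∏ j, fourierCoeffHeat u (n j) t := by
  intro ℓ k n
  have hcont : ∀ t, Continuous fun x => u (t, x) := fun t =>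
    continuous_iff_continuousAt.2 fun x => (hdx t x).continuousAt
  have hcoeff : ∀ t ∈ Set.uIcc (0:ℝ) 1, ∀ m : ℤ,
      HasDerivAt (fourierCoeffHeat u m) (-(m : ℂ) ^ 2 * fourierCoeffHeat u m t) t := by
    intro t ht m
    rw [Set.uIcc_of_le zero_le_one] at ht
    have hslice : fourierCoeffHeat ut m t = fourierCoeffHeat uxx m t := by
      simp only [fourierCoeffHeat, hheat t ht]
    rw [← fourierCoeffHeat_second_deriv_eq_neg_sq_mul (hper t) (hdx t) (hdxx t)
      (huxx.comp (Continuous.prodMk_right t)), ← hslice]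
    exact hasDerivAt_fourierCoeffHeat hcont hut hdt m t
  have hprod : ∀ t ∈ Set.uIcc (0:ℝ) 1, HasDerivAt (fun t => ∏ j, fourierCoeffHeat u (n j) t)
      (-(∑ j, (n j : ℂ) ^ 2) * ∏ j, fourierCoeffHeat u (n j) t) t := fun t ht => by
    rw [← Finset.sum_neg_distrib]
    exact HasDerivAt.finset_prod_of_hasDerivAt_const_mul _ fun j _ => hcoeff t ht (n j)
  have hmoment := moment_identity_of_hasDerivAt_const_mul ℓ hprod
  simp only [Complex.ofReal_one, Complex.ofReal_zero, one_pow, one_mul] at hmoment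
  linear_combination hmoment

/-- Linear moment equation (7.3) for the linear heat equation: for a classical
`2π`-periodic solution of `∂u/∂t = ∂²u/∂x²` on `[0,1]`, the moments built from
the Fourier coefficients satisfy
`∏ c_{n_j}(1) - 0^ℓ ∏ c_{n_j}(0) = ∫₀¹ ℓ t^{ℓ-1} ∏ c_{n_j}(t) dt
  - (Σ_j n_j²) ∫₀¹ t^ℓ ∏ c_{n_j}(t) dt`. -/
theorem linear_moment_equation_heat
    (u ut ux uxx : ℝ × ℝ → ℂ)
    (hper : ∀ t x : ℝ, u (t, x + 2 * Real.pi) = u (t, x))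
    (hu : Continuous u) (hux : Continuous ux)
    (hut : Continuous ut) (huxx : Continuous uxx)
    (hdt : ∀ t x : ℝ, HasDerivAt (fun s => u (s, x)) (ut (t, x)) t)
    (hdx : ∀ t x : ℝ, HasDerivAt (fun y => u (t, y)) (ux (t, x)) x)
    (hdxx : ∀ t x : ℝ, HasDerivAt (fun y => ux (t, y)) (uxx (t, x)) x)
    (hheat : ∀ t ∈ Set.Icc (0:ℝ) 1, ∀ x : ℝ, ut (t, x) = uxx (t, x)) :
    ∀ (ℓ k : ℕ) (n : Fin k → ℤ),
      (∏ j, fourierCoeffHeat u (n j) 1) - (0 : ℂ) ^ ℓ * ∏ j, fourierCoeffHeat u (n j) 0 =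
        (∫ t in (0:ℝ)..1, (ℓ : ℂ) * (t : ℂ) ^ (ℓ - 1) * ∏ j, fourierCoeffHeat u (n j) t) -
        (∑ j, ((n j : ℂ)) ^ 2) *
          ∫ t in (0:ℝ)..1, (t : ℂ) ^ ℓ * ∏ j, fourierCoeffHeat u (n j) t :=
  linear_moment_equation_heat_general u ut ux uxx hper hut huxx hdt hdx hdxx hheat
end

section
/- Let ε ∈ ℝ and let u : ℝ × ℝ → ℂ be such that u(t, x + 2π) = u(t, x) for all t, x, u is continuously differentiable in t, twice continuously differentiable in x, with ∂u/∂t and ∂²u/∂x² jointly continuous, and suppose ∂u/∂t (t,x) = ∂²u/∂x² (t,x) + ε · u(t,x)² for all t ∈ [0,1] and x ∈ ℝ. For n ∈ ℤ define c_n(t) := (1/(2π)) ∫_{−π}^{π} u(t,x) e^{−i n x} dx, and assume that for each t ∈ [0,1] the family (c_n(t))_{n∈ℤ} is absolutely summable with ∑_{n} |c_n(t)| uniformly bounded in t. Then for all ℓ, k ∈ ℕ and n₁, …, n_k ∈ ℤ: ∏_{j=1}^k c_{n_j}(1) − 0^ℓ ∏_{j=1}^k c_{n_j}(0) = ∫₀¹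 ℓ t^{ℓ−1} ∏_{j=1}^k c_{n_j}(t) dt − Σ_{j=1}^k n_j² ∫₀¹ t^ℓ ∏_{j=1}^k c_{n_j}(t) dt + ε Σ_{j=1}^k Σ_{m ∈ ℤ} ∫₀¹ t^ℓ ( ∏_{i≠j} c_{n_i}(t) ) · c_m(t) · c_{n_j − m}(t) dt, where 0⁰ = 1 and the term ℓ t^{ℓ−1} vanishes identically when ℓ = 0. -/
/-!
Testing the equation against `e^{-inx}` and integrating by parts twice in `x` (periodicity
kills the boundary terms) turns it into the infinite ODE system
`c_n' = -n² c_n + ε ∑_m c_m c_{n-m}`, the convolution coming from expanding one factor of `u²`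
into its absolutely convergent Fourier series. Integrating the derivative of
`t^ℓ ∏_j c_{n_j}(t)` over `[0,1]` then gives the identity, once the sum over `m` is pulled out
of the time integral; this is dominated convergence, because `∑_m |c_m c_{n-m}|` is at most
`sup_m |c_m| · ∑_m |c_m|`, which is bounded uniformly in `t`.
-/

open AddCircle MeasureTheory Complex Real Set
open scoped Interval

theorem Function.Periodic.apply_neg_pi {α : Type*} {f : ℝ → α} (hf : f.Periodic (2 * π)) :
    f (-π) = f π := by
  simpa [two_mul] using hf.sub_eq π

theorem Function.Periodic.periodic_of_hasDerivAt_s13 {f f' : ℝ → ℂ} {p : ℝ} (hf : f.Periodic p)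
    (hf' : ∀ x, HasDerivAt f (f' x) x) : f'.Periodic p := fun x =>
  ((hf' (x + p)).comp_add_const x p).unique (by rw [hf.funext]; exact hf' x)

theorem hasDerivAt_intervalIntegral_of_continuous {E : Type*} [NormedAddCommGroup E]
    [NormedSpace ℝ E] {v v' : ℝ × ℝ → E} (hv : Continuous v) (hv' : Continuous v')
    (hd : ∀ t x, HasDerivAt (fun s => v (s, x)) (v' (t, x)) t) (a b t₀ : ℝ) :
    HasDerivAt (fun t => ∫ x in a..b, v (t, x)) (∫ x in a..b, v' (t₀, x)) t₀ := by
  obtain ⟨M, hM⟩ := ((isCompact_closedBall t₀ 1).prod isCompact_uIcc).exists_bound_of_continuousOn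
    hv'.continuousOn
  refine (intervalIntegral.hasDerivAt_integral_of_dominated_loc_of_deriv_le (bound := fun _ => M)
    (Metric.closedBall_mem_nhds t₀ one_pos) (.of_forall fun t => by fun_prop)
    ((by fun_prop : Continuous fun x => v (t₀, x)).intervalIntegrable _ _) (by fun_prop)
    (ae_of_all _ fun x hx t ht => hM (t, x) ⟨ht, uIoc_subset_uIcc hx⟩)
    intervalIntegrable_const (ae_of_all _ fun x _ t _ => hd t x)).2

theorem fourierCoeffOn_add {a b : ℝ} (hab : a < b) {f g : ℝ → ℂ}
    (hf : IntervalIntegrable f volume a b) (hg : IntervalIntegrable g volume a b) (n : ℤ) :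
    fourierCoeffOn hab (fun x => f x + g x) n =
      fourierCoeffOn hab f n + fourierCoeffOn hab g n := by
  have hmode : ContinuousOn (fun x : ℝ => fourier (-n) (x : AddCircle (b - a))) (uIcc a b) := by
    fun_prop
  simp only [fourierCoeffOn_eq_integral, smul_eq_mul, mul_add]
  rw [intervalIntegral.integral_add (hf.continuousOn_mul hmode) (hg.continuousOn_mul hmode),
    smul_add]

theorem fourierCoeffOn_of_hasDerivAt_of_eq {a b : ℝ} (hab : a < b) {f f' : ℝ → ℂ}
    (hf : ∀ x ∈ uIcc a b, HasDerivAt f (f' x) x) (hf' : IntervalIntegrable f' volume a b)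
    (hfab : f a = f b) (n : ℤ) :
    fourierCoeffOn hab f' n = 2 * π * I * n / (b - a) * fourierCoeffOn hab f n := by
  rcases eq_or_ne n 0 with rfl | hn
  · simp [fourierCoeffOn_eq_integral, intervalIntegral.integral_eq_sub_of_hasDerivAt hf hf', hfab]
  · have hba : ((b : ℂ) - a) ≠ 0 := sub_ne_zero.2 (ofReal_injective.ne hab.ne')
    rw [fourierCoeffOn_of_hasDerivAt hab hn hf hf', hfab, sub_self, mul_zero, zero_sub]
    field_simp

theorem fourierCoeffOn_of_periodic_of_hasDerivAt_two {f f' f'' : ℝ → ℂ}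
    (hf : f.Periodic (2 * π)) (hf' : ∀ x, HasDerivAt f (f' x) x)
    (hf'' : ∀ x, HasDerivAt f' (f'' x) x) (hc'' : Continuous f'') (n : ℤ) :
    fourierCoeffOn (neg_lt_self pi_pos) f'' n =
      -(n : ℂ) ^ 2 * fourierCoeffOn (neg_lt_self pi_pos) f n := by
  have hc' : Continuous f' := continuous_iff_continuousAt.2 fun x => (hf'' x).continuousAt
  rw [fourierCoeffOn_of_hasDerivAt_of_eq _ (fun x _ => hf'' x) (hc''.intervalIntegrable _ _)
      (hf.periodic_of_hasDerivAt_s13 hf').apply_neg_pi,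
    fourierCoeffOn_of_hasDerivAt_of_eq _ (fun x _ => hf' x) (hc'.intervalIntegrable _ _)
      hf.apply_neg_pi]
  push_cast
  field_simp
  rw [I_sq]
  ring

theorem continuous_fourierCoeffOn {a b : ℝ} (hab : a < b) {u : ℝ × ℝ → ℂ}
    (hu : Continuous u) (n : ℤ) :
    Continuous fun t => fourierCoeffOn hab (fun x => u (t, x)) n := by
  simp_rw [fourierCoeffOn_eq_integral]
  exact (intervalIntegral.continuous_parametric_intervalIntegral_of_continuous' (by fun_prop)
    a b).const_smul _

theorem hasDerivAt_fourierCoeffOn {a b : ℝ} (hab : a < b) {u ut : ℝ × ℝ → ℂ}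
    (hu : Continuous u) (hut : Continuous ut)
    (hd : ∀ t x, HasDerivAt (fun s => u (s, x)) (ut (t, x)) t) (n : ℤ) (t₀ : ℝ) :
    HasDerivAt (fun t => fourierCoeffOn hab (fun x => u (t, x)) n)
      (fourierCoeffOn hab (fun x => ut (t₀, x)) n) t₀ := by
  simp_rw [fourierCoeffOn_eq_integral]
  exact (hasDerivAt_intervalIntegral_of_continuous
    (v := fun p => fourier (-n) (p.2 : AddCircle (b - a)) • u p)
    (v' := fun p => fourier (-n) (p.2 : AddCircle (b - a)) • ut p) (by fun_prop) (by fun_prop)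
    (fun t x => (hd t x).const_smul (fourier (-n) (x : AddCircle (b - a)))) a b t₀).const_smul _

theorem hasSum_fourierCoeff_mul {T : ℝ} [Fact (0 < T)] {F G : C(AddCircle T, ℂ)}
    (hF : Summable (fourierCoeff F)) (n : ℤ) :
    HasSum (fun m => fourierCoeff F m * fourierCoeff G (n - m))
      (fourierCoeff (fun x => F x * G x) n) := by
  have hmode (m : ℤ) (x : AddCircle T) :
      fourier (-n) x * (fourier m x * G x) = fourier (-(n - m)) x • G x := by
    rw [smul_eq_mul, ← mul_assoc, ← fourier_add]; ring_nf
  have hsum := hasSum_integral_of_dominated_convergence (μ := haarAddCircle)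
    (F := fun m x => fourierCoeff F m * (fourier (-n) x * (fourier m x * G x)))
    (f := fun x => fourier (-n) x • (F x * G x)) (fun m _ => ‖fourierCoeff F m‖ * ‖G‖)
    (fun m => by fun_prop) (fun m => ae_of_all _ fun x => ?_)
    (ae_of_all _ fun _ => hF.norm.mul_right _) (integrable_const _) (ae_of_all _ fun x => ?_)
  · simp only [MeasureTheory.integral_const_mul, hmode] at hsum
    exact hsum
  · simpa [Circle.norm_coe] using
      mul_le_mul_of_nonneg_left (G.norm_coe_le_norm x) (norm_nonneg (fourierCoeff F m))
  · simpa [smul_eq_mul, mul_comm, mul_left_comm, mul_assoc] using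
      (has_pointwise_sum_fourier_series_of_summable hF x).mul_right (fourier (-n) x * G x)

theorem continuous_liftIoc_of_eq {a b : ℝ} [Fact (0 < b - a)] {f : ℝ → ℂ}
    (hf : ContinuousOn f (Icc a b)) (hfab : f a = f b) :
    Continuous (liftIoc (b - a) a f) :=
  liftIoc_continuous (by rwa [add_sub_cancel]) (by rwa [add_sub_cancel])

theorem hasSum_fourierCoeffOn_mul {a b : ℝ} (hab : a < b) {f g : ℝ → ℂ}
    (hf : ContinuousOn f (Icc a b)) (hfab : f a = f b)
    (hg : ContinuousOn g (Icc a b)) (hgab : g a = g b)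
    (hsum : Summable (fourierCoeffOn hab f)) (n : ℤ) :
    HasSum (fun m => fourierCoeffOn hab f m * fourierCoeffOn hab g (n - m))
      (fourierCoeffOn hab (fun x => f x * g x) n) := by
  have : Fact (0 < b - a) := ⟨sub_pos.2 hab⟩
  -- `fourierCoeffOn hab f` unfolds to the coefficients of the periodization `liftIoc (b - a) a f`.
  exact hasSum_fourierCoeff_mul (F := ⟨_, continuous_liftIoc_of_eq hf hfab⟩)
    (G := ⟨_, continuous_liftIoc_of_eq hg hgab⟩) hsum n

theorem fourierCoeffHeat_eq_fourierCoeffOn (u : ℝ × ℝ → ℂ) (n : ℤ) (t : ℝ) :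
    fourierCoeffHeat u n t = fourierCoeffOn (neg_lt_self pi_pos) (fun x => u (t, x)) n := by
  rw [fourierCoeffOn_eq_integral, fourierCoeffHeat, real_smul]
  congr 1
  · push_cast; ring
  · refine intervalIntegral.integral_congr fun x _ => ?_
    rw [fourier_coe_apply, smul_eq_mul, mul_comm]
    congr 2
    push_cast
    field_simp
    ring

theorem hasDerivAt_fourierCoeffHeat_s13 {ε : ℂ} {u ut : ℝ × ℝ → ℂ} (hu : Continuous u)
    (hut : Continuous ut) (hdt : ∀ t x, HasDerivAt (fun s => u (s, x)) (ut (t, x)) t)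
    {t : ℝ} {v' v'' : ℝ → ℂ} (hper : (fun x => u (t, x)).Periodic (2 * π))
    (hdx : ∀ x, HasDerivAt (fun y => u (t, y)) (v' x) x) (hdxx : ∀ x, HasDerivAt v' (v'' x) x)
    (hv'' : Continuous v'') (hpde : ∀ x, ut (t, x) = v'' x + ε * u (t, x) ^ 2) (n : ℤ) :
    HasDerivAt (fourierCoeffHeat u n)
      (-(n : ℂ) ^ 2 * fourierCoeffHeat u n t +
        ε * fourierCoeffOn (neg_lt_self pi_pos) (fun x => u (t, x) ^ 2) n) t := by
  rw [funext (fourierCoeffHeat_eq_fourierCoeffOn u n)]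
  convert hasDerivAt_fourierCoeffOn _ hu hut hdt n t using 1
  have hsq : Continuous fun x => ε * u (t, x) ^ 2 := by fun_prop
  simp only [hpde]
  rw [fourierCoeffOn_add _ (hv''.intervalIntegrable _ _) (hsq.intervalIntegrable _ _),
    fourierCoeffOn.const_mul, fourierCoeffOn_of_periodic_of_hasDerivAt_two hper hdx hdxx hv'']

theorem prod_sub_zero_pow_mul_prod_eq_integral {ι : Type*} [Fintype ι] [DecidableEq ι]
    {f f' : ι → ℝ → ℂ} (hf : ∀ j, ∀ t ∈ Icc (0 : ℝ) 1, HasDerivAt (f j) (f' j t) t)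
    (hf' : ∀ j, ContinuousOn (f' j) (Icc 0 1)) (ℓ : ℕ) :
    (∏ j, f j 1) - (0 : ℂ) ^ ℓ * ∏ j, f j 0 =
      (∫ t in (0 : ℝ)..1, (ℓ : ℂ) * (t : ℂ) ^ (ℓ - 1) * ∏ j, f j t) +
        ∑ j, ∫ t in (0 : ℝ)..1,
          (t : ℂ) ^ ℓ * (∏ i ∈ Finset.univ.erase j, f i t) * f' j t := by
  have hcont (j : ι) : ContinuousOn (f j) (Icc 0 1) := fun t ht =>
    (hf j t ht).continuousAt.continuousWithinAt
  have hderiv : ∀ t ∈ uIcc (0 : ℝ) 1,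
      HasDerivAt (fun s : ℝ => (s : ℂ) ^ ℓ * ∏ j, f j s)
        ((ℓ : ℂ) * (t : ℂ) ^ (ℓ - 1) * ∏ j, f j t +
          (t : ℂ) ^ ℓ * ∑ j, (∏ i ∈ Finset.univ.erase j, f i t) * f' j t) t := by
    intro t ht
    rw [uIcc_of_le zero_le_one] at ht
    have hprod := HasDerivAt.finsetProd (u := Finset.univ) fun j _ => hf j t ht
    simp only [smul_eq_mul, Finset.prod_fn] at hprod
    exact ((hasDerivAt_pow ℓ (t : ℂ)).comp_ofReal).mul hprod
  have hint (g : ℝ → ℂ) (hg : ContinuousOn g (Icc 0 1)) : IntervalIntegrable g volume 0 1 :=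
    hg.intervalIntegrable_of_Icc zero_le_one
  have hftc := intervalIntegral.integral_eq_sub_of_hasDerivAt hderiv (hint _ (by fun_prop))
  rw [ofReal_one, one_pow, one_mul, ofReal_zero] at hftc
  rw [← hftc, intervalIntegral.integral_add (hint _ (by fun_prop)) (hint _ (by fun_prop))]
  simp_rw [Finset.mul_sum, ← mul_assoc]
  rw [intervalIntegral.integral_finsetSum fun j _ => hint _ (by fun_prop)]

theorem hasSum_intervalIntegral_mul_conv {a b : ℝ} (hab : a ≤ b) {c : ℤ → ℝ → ℂ}
    {w q : ℝ → ℂ} (hc : ∀ m, Continuous (c m)) (hw : Continuous w)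
    (hsum : ∀ t ∈ Icc a b, Summable fun m => ‖c m t‖)
    (hbdd : ∃ C, ∀ t ∈ Icc a b, ∑' m, ‖c m t‖ ≤ C) {n : ℤ}
    (hq : ∀ t ∈ Icc a b, HasSum (fun m => c m t * c (n - m) t) (q t)) :
    HasSum (fun m => ∫ t in a..b, w t * (c m t * c (n - m) t)) (∫ t in a..b, w t * q t) := by
  obtain ⟨C, hC⟩ := hbdd
  obtain ⟨W, hW⟩ :=
    (isCompact_Icc (a := a) (b := b)).exists_bound_of_continuousOn hw.continuousOn
  have hIoc : ∀ t ∈ Ι a b, t ∈ Icc a b := fun t ht => uIcc_of_le hab ▸ uIoc_subset_uIcc ht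
  have hcC : ∀ t ∈ Icc a b, ∀ m, ‖c m t‖ ≤ C := fun t ht m =>
    ((hsum t ht).le_tsum m fun _ _ => norm_nonneg _).trans (hC t ht)
  refine intervalIntegral.hasSum_integral_of_dominated_convergence
    (fun m t => W * C * ‖c m t‖) (fun m => by fun_prop) (fun m => ae_of_all _ fun t ht => ?_)
    (ae_of_all _ fun t ht => (hsum t (hIoc t ht)).mul_left _) ?_
    (ae_of_all _ fun t ht => (hq t (hIoc t ht)).mul_left (w t))
  · have hwt := hW t (hIoc t ht)
    calc ‖w t * (c m t * c (n - m) t)‖ = ‖w t‖ * (‖c m t‖ * ‖c (n - m) t‖) := by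
          rw [norm_mul, norm_mul]
      _ ≤ W * (‖c m t‖ * C) := mul_le_mul hwt
          (mul_le_mul_of_nonneg_left (hcC t (hIoc t ht) (n - m)) (norm_nonneg _))
          (by positivity) ((norm_nonneg _).trans hwt)
      _ = W * C * ‖c m t‖ := by ring
  · simp_rw [tsum_mul_left]
    refine IntervalIntegrable.const_mul ?_ _
    rw [intervalIntegrable_iff_integrableOn_Ioc_of_le hab]
    refine Measure.integrableOn_of_bounded (M := C) measure_Ioc_lt_top.ne ?_ ?_
    · exact (Measurable.tsum fun m => (hc m).norm.measurable).aestronglyMeasurable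
    · refine ae_restrict_of_forall_mem measurableSet_Ioc fun t ht => ?_
      rw [Real.norm_of_nonneg (tsum_nonneg fun m => norm_nonneg _)]
      exact hC t (Ioc_subset_Icc_self ht)

theorem moment_identity_of_hasDerivAt {ε : ℂ} {c q : ℤ → ℝ → ℂ}
    (hc : ∀ m, Continuous (c m)) (hq : ∀ m, Continuous (q m))
    (hderiv : ∀ m, ∀ t ∈ Icc (0 : ℝ) 1,
      HasDerivAt (c m) (-(m : ℂ) ^ 2 * c m t + ε * q m t) t)
    (hconv : ∀ m, ∀ t ∈ Icc (0 : ℝ) 1, HasSum (fun k => c k t * c (m - k) t) (q m t))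
    (hsum : ∀ t ∈ Icc (0 : ℝ) 1, Summable fun m => ‖c m t‖)
    (hbdd : ∃ C, ∀ t ∈ Icc (0 : ℝ) 1, ∑' m, ‖c m t‖ ≤ C)
    {ι : Type*} [Fintype ι] [DecidableEq ι] (ℓ : ℕ) (n : ι → ℤ) :
    (∏ j, c (n j) 1) - (0 : ℂ) ^ ℓ * ∏ j, c (n j) 0 =
      (∫ t in (0 : ℝ)..1, (ℓ : ℂ) * (t : ℂ) ^ (ℓ - 1) * ∏ j, c (n j) t) -
        (∑ j, (n j : ℂ) ^ 2) * (∫ t in (0 : ℝ)..1, (t : ℂ) ^ ℓ * ∏ j, c (n j) t) +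
        ε * ∑ j, ∑' m, ∫ t in (0 : ℝ)..1, (t : ℂ) ^ ℓ *
          (∏ i ∈ Finset.univ.erase j, c (n i) t) * (c m t * c (n j - m) t) := by
  rw [prod_sub_zero_pow_mul_prod_eq_integral (fun j => hderiv (n j))
    (fun j => by fun_prop) ℓ]
  have hterm (j : ι) :
      ∫ t in (0 : ℝ)..1, (t : ℂ) ^ ℓ * (∏ i ∈ Finset.univ.erase j, c (n i) t) *
        (-(n j : ℂ) ^ 2 * c (n j) t + ε * q (n j) t) =
      -(n j : ℂ) ^ 2 * (∫ t in (0 : ℝ)..1, (t : ℂ) ^ ℓ * ∏ j, c (n j) t) +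
        ε * ∑' m, ∫ t in (0 : ℝ)..1, (t : ℂ) ^ ℓ *
          (∏ i ∈ Finset.univ.erase j, c (n i) t) * (c m t * c (n j - m) t) := by
    have hsplit : ∀ t : ℝ, (t : ℂ) ^ ℓ * (∏ i ∈ Finset.univ.erase j, c (n i) t) *
        (-(n j : ℂ) ^ 2 * c (n j) t + ε * q (n j) t) =
        -(n j : ℂ) ^ 2 * ((t : ℂ) ^ ℓ * ∏ j, c (n j) t) +
          ε * ((t : ℂ) ^ ℓ * (∏ i ∈ Finset.univ.erase j, c (n i) t) * q (n j) t) := by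
      intro t
      rw [← Finset.prod_erase_mul _ _ (Finset.mem_univ j)]
      ring
    simp_rw [hsplit]
    rw [intervalIntegral.integral_add ((by fun_prop : Continuous _).intervalIntegrable _ _)
      ((by fun_prop : Continuous _).intervalIntegrable _ _), intervalIntegral.integral_const_mul,
      intervalIntegral.integral_const_mul, (hasSum_intervalIntegral_mul_conv zero_le_one hc
        (by fun_prop) hsum hbdd (hconv (n j))).tsum_eq]
  simp only [hterm, Finset.sum_add_distrib, ← Finset.sum_mul, ← Finset.mul_sum,
    Finset.sum_neg_distrib]
  ring

theorem linear_moment_equation_heat_local_nonlinearity_general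
    (ε : ℝ) (u ut ux uxx : ℝ × ℝ → ℂ)
    (hper : ∀ t x : ℝ, u (t, x + 2 * Real.pi) = u (t, x))
    (hu : Continuous u)
    (hut : Continuous ut) (huxx : Continuous uxx)
    (hdt : ∀ t x : ℝ, HasDerivAt (fun s => u (s, x)) (ut (t, x)) t)
    (hdx : ∀ t x : ℝ, HasDerivAt (fun y => u (t, y)) (ux (t, x)) x)
    (hdxx : ∀ t x : ℝ, HasDerivAt (fun y => ux (t, y)) (uxx (t, x)) x)
    (hpde : ∀ t ∈ Set.Icc (0:ℝ) 1, ∀ x : ℝ,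
      ut (t, x) = uxx (t, x) + (ε : ℂ) * (u (t, x)) ^ 2)
    (hsum : ∀ t ∈ Set.Icc (0:ℝ) 1, Summable fun n : ℤ => ‖fourierCoeffHeat u n t‖)
    (hbdd : ∃ C : ℝ, ∀ t ∈ Set.Icc (0:ℝ) 1, (∑' n : ℤ, ‖fourierCoeffHeat u n t‖) ≤ C) :
    ∀ (ℓ k : ℕ) (n : Fin k → ℤ),
      (∏ j, fourierCoeffHeat u (n j) 1) - (0 : ℂ) ^ ℓ * ∏ j, fourierCoeffHeat u (n j) 0 =
        (∫ t in (0:ℝ)..1, (ℓ : ℂ) * (t : ℂ) ^ (ℓ - 1) * ∏ j, fourierCoeffHeat u (n j) t) -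
        (∑ j, ((n j : ℂ)) ^ 2) *
          (∫ t in (0:ℝ)..1, (t : ℂ) ^ ℓ * ∏ j, fourierCoeffHeat u (n j) t) +
        (ε : ℂ) * ∑ j, ∑' m : ℤ,
          ∫ t in (0:ℝ)..1, (t : ℂ) ^ ℓ *
            (∏ i ∈ Finset.univ.erase j, fourierCoeffHeat u (n i) t) *
            (fourierCoeffHeat u m t * fourierCoeffHeat u (n j - m) t) := by
  intro ℓ k n
  have hab : -π < π := neg_lt_self pi_pos
  have hcoeff (m : ℤ) :
      fourierCoeffHeat u m = fun t => fourierCoeffOn hab (fun x => u (t, x)) m :=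
    funext (fourierCoeffHeat_eq_fourierCoeffOn u m)
  refine moment_identity_of_hasDerivAt
    (q := fun m t => fourierCoeffOn hab (fun x => u (t, x) ^ 2) m)
    (fun m => hcoeff m ▸ continuous_fourierCoeffOn hab hu m)
    (fun m => continuous_fourierCoeffOn hab (u := fun p => u p ^ 2) (hu.pow 2) m)
    (fun m t ht => hasDerivAt_fourierCoeffHeat_s13 hu hut hdt (hper t) (hdx t) (hdxx t)
      (by fun_prop) (hpde t ht) m)
    (fun m t ht => ?_) hsum hbdd ℓ n
  have hcont : ContinuousOn (fun x => u (t, x)) (Icc (-π) π) := by fun_prop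
  have hends := Function.Periodic.apply_neg_pi (f := fun x => u (t, x)) (hper t)
  simp only [hcoeff, sq]
  exact hasSum_fourierCoeffOn_mul hab hcont hends hcont hends
    (by simpa [hcoeff] using (hsum t ht).of_norm) m

/-- Linear moment equation (7.13)–(7.14) for the heat equation with local
quadratic nonlinearity `∂u/∂t = ∂²u/∂x² + ε u²`. -/
theorem linear_moment_equation_heat_local_nonlinearity
    (ε : ℝ) (u ut ux uxx : ℝ × ℝ → ℂ)
    (hper : ∀ t x : ℝ, u (t, x + 2 * Real.pi) = u (t, x))
    (hu : Continuous u) (hux : Continuous ux)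
    (hut : Continuous ut) (huxx : Continuous uxx)
    (hdt : ∀ t x : ℝ, HasDerivAt (fun s => u (s, x)) (ut (t, x)) t)
    (hdx : ∀ t x : ℝ, HasDerivAt (fun y => u (t, y)) (ux (t, x)) x)
    (hdxx : ∀ t x : ℝ, HasDerivAt (fun y => ux (t, y)) (uxx (t, x)) x)
    (hpde : ∀ t ∈ Set.Icc (0:ℝ) 1, ∀ x : ℝ,
      ut (t, x) = uxx (t, x) + (ε : ℂ) * (u (t, x)) ^ 2)
    (hsum : ∀ t ∈ Set.Icc (0:ℝ) 1, Summable fun n : ℤ => ‖fourierCoeffHeat u n t‖)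
    (hbdd : ∃ C : ℝ, ∀ t ∈ Set.Icc (0:ℝ) 1, (∑' n : ℤ, ‖fourierCoeffHeat u n t‖) ≤ C) :
    ∀ (ℓ k : ℕ) (n : Fin k → ℤ),
      (∏ j, fourierCoeffHeat u (n j) 1) - (0 : ℂ) ^ ℓ * ∏ j, fourierCoeffHeat u (n j) 0 =
        (∫ t in (0:ℝ)..1, (ℓ : ℂ) * (t : ℂ) ^ (ℓ - 1) * ∏ j, fourierCoeffHeat u (n j) t) -
        (∑ j, ((n j : ℂ)) ^ 2) *
          (∫ t in (0:ℝ)..1, (t : ℂ) ^ ℓ * ∏ j, fourierCoeffHeat u (n j) t) +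
        (ε : ℂ) * ∑ j, ∑' m : ℤ,
          ∫ t in (0:ℝ)..1, (t : ℂ) ^ ℓ *
            (∏ i ∈ Finset.univ.erase j, fourierCoeffHeat u (n i) t) *
            (fourierCoeffHeat u m t * fourierCoeffHeat u (n j - m) t) :=
  linear_moment_equation_heat_local_nonlinearity_general ε u ut ux uxx hper hu hut huxx hdt hdx hdxx
    hpde hsum hbdd
end

section
/- Let L : ℝ[X] → ℝ be a linear functional. Then there exists a Borel measure μ on the interval [0,1] such that L(p) = ∫₀¹ p(x) dμ(x) for every polynomial p ∈ ℝ[X] if and only if L(p²) ≥ 0 and L(X·(1−X)·p²) ≥ 0 for every p ∈ ℝ[X]. -/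
/-!
Positivity on squares and on `X(1-X)` times squares makes `L` nonnegative on every
`X^a (1-X)^b`, in particular on the Bernstein basis `b_{n,k}`. Hence
`μₙ = ∑ₖ L(b_{n,k}) δ_{k/n}` is a measure on `[0,1]` of mass `L 1` with
`∫ p dμₙ = L(Bₙ p)`, where `Bₙ` is the Bernstein operator. The recurrence
`Bₙ(X^{m+1}) = X Bₙ(X^m) + n⁻¹ X(1-X) (Bₙ(X^m))'` shows that `Bₙ p → p` in every linear
image, so `∫ p dμₙ → L p`. A weak cluster point of the `μₙ`, which exists because finite
measures of bounded mass on a compact space form a compact set, represents `L`.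
-/

open Polynomial MeasureTheory Filter Finset Topology

theorem MapClusterPt.eq_of_tendsto {X ι : Type*} [TopologicalSpace X] [T2Space X]
    {F : Filter ι} {u : ι → X} {x y : X} (hx : MapClusterPt x F u) (hy : Tendsto u F (𝓝 y)) :
    x = y :=
  eq_of_nhds_neBot (ClusterPt.mono hx hy)

section Bernstein

theorem X_mul_derivative_X_pow (k : ℕ) :
    (X : ℝ[X]) * derivative (X ^ k) = (k : ℝ[X]) * X ^ k := by
  rcases k with _ | k
  · simp
  · rw [derivative_X_pow, C_eq_natCast, Nat.add_sub_cancel]; ring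

theorem one_sub_X_mul_derivative_one_sub_X_pow (k : ℕ) :
    (1 - X : ℝ[X]) * derivative ((1 - X) ^ k) = -((k : ℝ[X]) * (1 - X) ^ k) := by
  rcases k with _ | k
  · simp
  · rw [derivative_pow, C_eq_natCast, Nat.add_sub_cancel, derivative_sub, derivative_one,
      derivative_X]; ring

theorem bernsteinPolynomial_mul_derivative (n k : ℕ) :
    X * (1 - X) * derivative (bernsteinPolynomial ℝ n k)
      = ((k : ℝ[X]) - (n : ℝ[X]) * X) * bernsteinPolynomial ℝ n k := by
  rcases lt_or_ge n k with h | h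
  · simp [bernsteinPolynomial.eq_zero_of_lt ℝ h]
  obtain ⟨j, rfl⟩ := Nat.exists_eq_add_of_le h
  have hX := X_mul_derivative_X_pow k
  have h1X := one_sub_X_mul_derivative_one_sub_X_pow j
  simp only [bernsteinPolynomial, Nat.add_sub_cancel_left, derivative_mul, derivative_natCast,
    zero_mul, zero_add]
  push_cast
  linear_combination ((k + j).choose k : ℝ[X]) * ((1 - X) ^ j * (1 - X) * hX + X ^ k * X * h1X)

noncomputable def bernsteinOperator (n : ℕ) : ℝ[X] →ₗ[ℝ] ℝ[X] :=
  ∑ k ∈ range (n + 1), (leval ((k : ℝ) / n)).smulRight (bernsteinPolynomial ℝ n k)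

theorem bernsteinOperator_apply (n : ℕ) (p : ℝ[X]) :
    bernsteinOperator n p
      = ∑ k ∈ range (n + 1), p.eval ((k : ℝ) / n) • bernsteinPolynomial ℝ n k := by
  simp [bernsteinOperator]

theorem bernsteinOperator_one (n : ℕ) : bernsteinOperator n 1 = 1 := by
  simp [bernsteinOperator_apply, bernsteinPolynomial.sum]

theorem bernsteinOperator_X_pow_succ {n : ℕ} (hn : n ≠ 0) (m : ℕ) :
    bernsteinOperator n (X ^ (m + 1)) = X * bernsteinOperator n (X ^ m)
      + (n : ℝ)⁻¹ • (X * (1 - X) * derivative (bernsteinOperator n (X ^ m))) := by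
  simp only [bernsteinOperator_apply, eval_pow, eval_X, derivative_sum, derivative_smul,
    mul_sum, mul_smul_comm, smul_sum, ← sum_add_distrib]
  have hn' : (n : ℝ) ≠ 0 := Nat.cast_ne_zero.2 hn
  refine sum_congr rfl fun k _ => ?_
  rw [bernsteinPolynomial_mul_derivative, sub_mul, smul_sub, smul_sub, ← C_eq_natCast,
    ← C_eq_natCast, mul_assoc, ← smul_eq_C_mul, ← smul_eq_C_mul]
  match_scalars
  · ring
  · field_simp; ring

variable {E : Type*} [AddCommGroup E] [Module ℝ E] [TopologicalSpace E] [IsTopologicalAddGroup E]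
  [ContinuousSMul ℝ E]

/-- The induction runs over all `Λ` at once, because the recurrence for `Bₙ(X^{m+1})` feeds
`Bₙ(X^m)` into the two other linear maps `Λ(X ·)` and `Λ(X(1-X) (·)')`. -/
theorem tendsto_bernsteinOperator_X_pow (m : ℕ) (Λ : ℝ[X] →ₗ[ℝ] E) :
    Tendsto (fun n => Λ (bernsteinOperator n (X ^ m))) atTop (𝓝 (Λ (X ^ m))) := by
  induction m generalizing Λ with
  | zero => simpa [bernsteinOperator_one] using tendsto_const_nhds
  | succ m ih =>
    let Λ₁ := Λ ∘ₗ LinearMap.mulLeft ℝ X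
    let Λ₂ := Λ ∘ₗ LinearMap.mulLeft ℝ (X * (1 - X)) ∘ₗ derivative
    have hrec : (fun n => Λ₁ (bernsteinOperator n (X ^ m))
        + (n : ℝ)⁻¹ • Λ₂ (bernsteinOperator n (X ^ m))) =ᶠ[atTop]
        fun n => Λ (bernsteinOperator n (X ^ (m + 1))) := by
      filter_upwards [eventually_ne_atTop 0] with n hn
      simp [Λ₁, Λ₂, bernsteinOperator_X_pow_succ hn, mul_assoc]
    have hinv : Tendsto (fun n : ℕ => (n : ℝ)⁻¹) atTop (𝓝 0) :=
      tendsto_inv_atTop_zero.comp tendsto_natCast_atTop_atTop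
    have hlim : Λ (X ^ (m + 1)) = Λ₁ (X ^ m) + (0 : ℝ) • Λ₂ (X ^ m) := by
      simp [Λ₁, pow_succ']
    rw [hlim]
    exact ((ih Λ₁).add (hinv.smul (ih Λ₂))).congr' hrec

theorem tendsto_bernsteinOperator (Λ : ℝ[X] →ₗ[ℝ] E) (p : ℝ[X]) :
    Tendsto (fun n => Λ (bernsteinOperator n p)) atTop (𝓝 (Λ p)) := by
  induction p using Polynomial.induction_on' with
  | add p q hp hq => simpa using hp.add hq
  | monomial m a =>
    simpa [← smul_X_eq_monomial] using (tendsto_bernsteinOperator_X_pow m Λ).const_smul a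

end Bernstein

section Positivity

variable {L : ℝ[X] →ₗ[ℝ] ℝ}

theorem map_X_pow_mul_one_sub_X_pow_nonneg
    (hL : ∀ p : ℝ[X], 0 ≤ L (p ^ 2) ∧ 0 ≤ L (X * (1 - X) * p ^ 2)) (a b : ℕ) :
    0 ≤ L (X ^ a * (1 - X) ^ b) := by
  have hX (q : ℝ[X]) : 0 ≤ L (X * q ^ 2) := by
    rw [show X * q ^ 2 = (X * q) ^ 2 + X * (1 - X) * q ^ 2 by ring, map_add]
    exact add_nonneg (hL _).1 (hL _).2
  have h1X (q : ℝ[X]) : 0 ≤ L ((1 - X) * q ^ 2) := by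
    rw [show (1 - X) * q ^ 2 = ((1 - X) * q) ^ 2 + X * (1 - X) * q ^ 2 by ring, map_add]
    exact add_nonneg (hL _).1 (hL _).2
  obtain ⟨c, rfl | rfl⟩ := Nat.even_or_odd' a <;> obtain ⟨d, rfl | rfl⟩ := Nat.even_or_odd' b
  · convert (hL (X ^ c * (1 - X) ^ d)).1 using 2; ring
  · convert h1X (X ^ c * (1 - X) ^ d) using 2; ring
  · convert hX (X ^ c * (1 - X) ^ d) using 2; ring
  · convert (hL (X ^ c * (1 - X) ^ d)).2 using 2; ring

theorem map_bernsteinPolynomial_nonneg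
    (hL : ∀ p : ℝ[X], 0 ≤ L (p ^ 2) ∧ 0 ≤ L (X * (1 - X) * p ^ 2)) (n k : ℕ) :
    0 ≤ L (bernsteinPolynomial ℝ n k) := by
  rw [bernsteinPolynomial, mul_assoc, ← C_eq_natCast, ← smul_eq_C_mul, map_smul]
  exact smul_nonneg (Nat.cast_nonneg _) (map_X_pow_mul_one_sub_X_pow_nonneg hL k (n - k))

end Positivity

section Measures

noncomputable def bernsteinMeasure (L : ℝ[X] →ₗ[ℝ] ℝ) (n : ℕ) : Measure (Set.Icc (0 : ℝ) 1) :=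
  ∑ k ∈ range (n + 1), (L (bernsteinPolynomial ℝ n k)).toNNReal •
    Measure.dirac (Set.projIcc 0 1 zero_le_one ((k : ℝ) / n))

instance (L : ℝ[X] →ₗ[ℝ] ℝ) (n : ℕ) : IsFiniteMeasure (bernsteinMeasure L n) := by
  unfold bernsteinMeasure; infer_instance

variable {L : ℝ[X] →ₗ[ℝ] ℝ}

theorem integral_bernsteinMeasure (hL : ∀ n k, 0 ≤ L (bernsteinPolynomial ℝ n k)) (n : ℕ)
    (p : ℝ[X]) : ∫ x, p.eval (x : ℝ) ∂bernsteinMeasure L n = L (bernsteinOperator n p) := by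
  rw [bernsteinMeasure, integral_finsetSum_measure fun k _ =>
    (integrable_dirac enorm_lt_top).smul_measure_nnreal]
  simp only [bernsteinOperator_apply, map_sum, map_smul, integral_smul_nnreal_measure,
    integral_dirac]
  refine sum_congr rfl fun k hk => ?_
  have hkn : (k : ℝ) ≤ n := by exact_mod_cast Nat.lt_succ_iff.1 (mem_range.1 hk)
  rw [Set.projIcc_of_mem _ ⟨by positivity, div_le_one_of_le₀ hkn n.cast_nonneg⟩, NNReal.smul_def,
    Real.coe_toNNReal _ (hL n k), smul_eq_mul, smul_eq_mul, mul_comm]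

theorem measureReal_univ_bernsteinMeasure (hL : ∀ n k, 0 ≤ L (bernsteinPolynomial ℝ n k))
    (n : ℕ) : (bernsteinMeasure L n).real Set.univ = L 1 := by
  simpa [bernsteinOperator_one] using integral_bernsteinMeasure hL n 1

theorem exists_measure_of_map_bernsteinPolynomial_nonneg
    (hL : ∀ n k, 0 ≤ L (bernsteinPolynomial ℝ n k)) :
    ∃ μ : Measure (Set.Icc (0 : ℝ) 1), ∀ p : ℝ[X], L p = ∫ x, p.eval (x : ℝ) ∂μ := by
  let μs (n : ℕ) : FiniteMeasure (Set.Icc (0 : ℝ) 1) := ⟨bernsteinMeasure L n, inferInstance⟩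
  have hmass (n : ℕ) : (μs n).mass = (L 1).toNNReal := by
    rw [← measureReal_univ_bernsteinMeasure hL n]; exact Real.toNNReal_coe.symm
  obtain ⟨ν, -, hν⟩ :=
    (isCompact_setOfPred_finiteMeasure_eq_of_compactSpace _ (L 1).toNNReal).exists_mapClusterPt
      (f := atTop) (tendsto_principal.2 (Eventually.of_forall hmass))
  refine ⟨ν, fun p => ?_⟩
  have hcont :=
    FiniteMeasure.continuous_integral_continuousMap (p.toContinuousMapOn (Set.Icc (0 : ℝ) 1))
  refine ((hν.continuousAt_comp hcont.continuousAt).eq_of_tendsto ?_).symm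
  exact (tendsto_bernsteinOperator L p).congr fun n => (integral_bernsteinMeasure hL n p).symm

end Measures

/-- Hausdorff's theorem on the `[0,1]` moment problem: a linear functional
`L : ℝ[X] → ℝ` has a representing Borel measure on `[0,1]` if and only if
`L(p²) ≥ 0` and `L(X(1-X)p²) ≥ 0` for every polynomial `p`. -/
theorem hausdorff_moment_problem (L : Polynomial ℝ →ₗ[ℝ] ℝ) :
    (∃ μ : MeasureTheory.Measure (Set.Icc (0:ℝ) 1),
      ∀ p : Polynomial ℝ, L p = ∫ x : Set.Icc (0:ℝ) 1, p.eval (x : ℝ) ∂μ) ↔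
    (∀ p : Polynomial ℝ,
      0 ≤ L (p ^ 2) ∧ 0 ≤ L (Polynomial.X * (1 - Polynomial.X) * p ^ 2)) := by
  constructor
  · rintro ⟨μ, hμ⟩ p
    have hx (x : Set.Icc (0 : ℝ) 1) : 0 ≤ (x : ℝ) * (1 - x) :=
      mul_nonneg x.2.1 (sub_nonneg.2 x.2.2)
    rw [hμ, hμ]
    exact ⟨integral_nonneg fun x => by simp only [eval_pow]; positivity,
      integral_nonneg fun x => by simpa using mul_nonneg (hx x) (sq_nonneg (p.eval (x : ℝ)))⟩
  · exact fun hL => exists_measure_of_map_bernsteinPolynomial_nonneg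
      (map_bernsteinPolynomial_nonneg hL)
end
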